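/- arXiv:2106.00301 — 5 statements merged into one kernel-verified Lean document; each statement's English description precedes it below -/
import Mathlib

section
/- Let S₁, S₂ ⊆ {1,…,n} with S₁ ≠ S₂, and let S' ⊆ S₁ ∩ S₂. Then S₁ ▷ S₂ if and only if (S₁ \ S') ▷ (S₂ \ S'). -/
open Finset

/-- `S₁` dominates `S₂`: there is an injection `f : S₂ → S₁` with `f i ≤ i`. -/
def Dominates {n : ℕ} (S₁ S₂ : Finset (Fin n)) : Prop :=
  ∃ f : Fin n → Fin n, Set.InjOn f (S₂ : Set (Fin n)) ∧ ∀ i ∈ S₂, f i ∈ S₁ ∧ f i ≤ i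

/-- Columns of `A` are componentwise non-increasing. -/
def ColsOrdered {m n : ℕ} (A : Fin m → Fin n → ℕ) : Prop :=
  ∀ j : Fin m, ∀ i i' : Fin n, i ≤ i' → A j i' ≤ A j i

/-- `S` is a cover for the multiple knapsack set given by `A, b`. -/
def IsCover {m n : ℕ} (A : Fin m → Fin n → ℕ) (b : Fin m → ℕ) (S : Finset (Fin n)) : Prop :=
  ∃ j : Fin m, b j < ∑ i ∈ S, A j i

/-- Minimal cover: a cover none of whose proper subsets is a cover. -/
def IsMinimalCover {m n : ℕ} (A : Fin m → Fin n → ℕ) (b : Fin m → ℕ)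
    (S : Finset (Fin n)) : Prop :=
  IsCover A b S ∧ ∀ S' ⊂ S, ¬ IsCover A b S'

/-- The union `C = ∪ₕ Cₕ`. -/
def unionC {n k : ℕ} (C : Fin k → Finset (Fin n)) : Finset (Fin n) :=
  Finset.univ.sup C

/-- The intersection `C₀ = ∩ₕ Cₕ`. -/
def interC {n k : ℕ} (C : Fin k → Finset (Fin n)) : Finset (Fin n) :=
  Finset.univ.inf C

/-- `{C₁,…,C_k}` is a multi-cover for the TOMKS given by `A, b`. -/
def MultiCover {m n k : ℕ} (A : Fin m → Fin n → ℕ) (b : Fin m → ℕ)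
    (C : Fin k → Finset (Fin n)) : Prop :=
  (∀ h, IsCover A b (C h)) ∧
  ∀ T ⊆ unionC C \ interC C, (∀ h, T ≠ C h \ interC C) →
    ∃ h, Dominates T (C h \ interC C) ∨ Dominates (C h \ interC C) T

/-- Max of `g` over `S`, with the empty maximum taken to be `0`. -/
def fmax {ι : Type*} (S : Finset ι) (g : ι → ℤ) : ℤ :=
  if h : S.Nonempty then S.sup' h g else 0

/-- Min of `g` over `S`, with the empty minimum taken to be `0`. -/
def fmin {ι : Type*} (S : Finset ι) (g : ι → ℤ) : ℤ :=
  if h : S.Nonempty then S.inf' h g else 0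

/-- `α` is an MCI coefficient vector for the family of covers `C`. -/
def IsMCICoeff {n k : ℕ} (C : Fin k → Finset (Fin n)) (α : Fin n → ℤ) : Prop :=
  (∀ i, i ∉ unionC C → α i = 0) ∧
  (∀ i ∈ unionC C \ interC C, (∀ j ∈ unionC C \ interC C, j ≤ i) → α i = 1) ∧
  (∀ i ∈ unionC C \ interC C, (∃ j ∈ unionC C \ interC C, i < j) →
    ∀ h : Fin k, i ∈ C h →
      1 + fmax ((unionC C \ C h).filter (fun ℓ => i < ℓ)) α ≤ α i) ∧
  (∀ j ∈ interC C, ∃ h : Fin k,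
    max (fmax ((unionC C \ C h).filter (fun ℓ => ℓ < j)) α)
        (1 + ∑ ℓ ∈ (unionC C \ C h).filter (fun ℓ => j < ℓ), α ℓ) ≤ α j)

/-- `α` is the S-MCI coefficient vector for the family of covers `C`. -/
def IsSMCICoeff {n k : ℕ} (C : Fin k → Finset (Fin n)) (α : Fin n → ℤ) : Prop :=
  (∀ i, i ∉ unionC C → α i = 0) ∧
  (∀ i ∈ unionC C \ interC C,
    α i = 1 + fmax (Finset.univ.filter (fun h : Fin k => i ∈ C h))
        (fun h => fmax ((unionC C \ C h).filter (fun ℓ => i < ℓ)) α)) ∧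
  (∀ j ∈ interC C,
    α j = fmin (Finset.univ : Finset (Fin k))
        (fun h => max (fmax ((unionC C \ C h).filter (fun ℓ => ℓ < j)) α)
            (1 + ∑ ℓ ∈ (unionC C \ C h).filter (fun ℓ => j < ℓ), α ℓ)))

/-- Second-smallest value of the multiset `{α i : i ∈ D}` (for `|D| ≥ 2`). -/
def secondMin {n : ℕ} (α : Fin n → ℤ) (D : Finset (Fin n)) : ℤ :=
  fmax D (fun j => fmin (D.erase j) α)

/-- `πᵀ x ≤ 1` is a non-trivial facet-defining inequality for `conv(K)`. -/
def IsNontrivialFacet {m n : ℕ} (A : Fin m → Fin n → ℕ) (b : Fin m → ℕ)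
    (pv : Fin n → ℝ) : Prop :=
  (∀ i, 0 ≤ pv i) ∧
  (∃ i j : Fin n, i ≠ j ∧ pv i ≠ 0 ∧ pv j ≠ 0) ∧
  (∀ x : Fin n → ℝ, (∀ i, x i = 0 ∨ x i = 1) →
    (∀ j, ∑ i, (A j i : ℝ) * x i ≤ (b j : ℝ)) → ∑ i, pv i * x i ≤ 1) ∧
  (∃ pts : Fin n → (Fin n → ℝ), AffineIndependent ℝ pts ∧
    ∀ ℓ, (∀ i, pts ℓ i = 0 ∨ pts ℓ i = 1) ∧
      (∀ j, ∑ i, (A j i : ℝ) * pts ℓ i ≤ (b j : ℝ)) ∧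
      ∑ i, pv i * pts ℓ i = 1)

/-- `S` is a cover for the single knapsack set given by `a, b`. -/
def IsCoverK {n : ℕ} (a : Fin n → ℕ) (b : ℕ) (S : Finset (Fin n)) : Prop :=
  b < ∑ i ∈ S, a i

/-- Minimal cover for a single knapsack set. -/
def IsMinimalCoverK {n : ℕ} (a : Fin n → ℕ) (b : ℕ) (S : Finset (Fin n)) : Prop :=
  IsCoverK a b S ∧ ∀ S' ⊂ S, ¬ IsCoverK a b S'


lemma dominates_iff_count {n : ℕ} (S₁ S₂ : Finset (Fin n)) :
    Dominates S₁ S₂ ↔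
      ∀ k : Fin n, (S₂.filter (· ≤ k)).card ≤ (S₁.filter (· ≤ k)).card := by
  constructor
  · rintro ⟨f, hinj, hf⟩ k
    apply Finset.card_le_card_of_injOn f
    · intro i hi
      simp only [Finset.mem_coe, Finset.coe_filter, Finset.mem_filter, Set.mem_setOf_eq] at hi ⊢
      exact ⟨(hf i hi.1).1, le_trans (hf i hi.1).2 hi.2⟩
    · intro a ha b hb hab
      exact hinj (Finset.mem_coe.2 (Finset.mem_filter.1 ha).1)
        (Finset.mem_coe.2 (Finset.mem_filter.1 hb).1) hab
  · intro hcount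
    set t : ↥S₂ → Finset (Fin n) := fun i => S₁.filter (· ≤ i.1) with ht
    have hall : ∀ s : Finset ↥S₂, s.card ≤ (s.biUnion t).card := by
      intro s
      rcases s.eq_empty_or_nonempty with rfl | hs
      · simp
      · have hsv : (s.image Subtype.val).Nonempty := hs.image _
        set M := (s.image Subtype.val).max' hsv with hM
        have hMmem : M ∈ s.image Subtype.val := (s.image Subtype.val).max'_mem hsv
        obtain ⟨m, hm, hmv⟩ := Finset.mem_image.1 hMmem
        have h1 : s.card = (s.image Subtype.val).card :=
          (Finset.card_image_of_injective s Subtype.val_injective).symm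
        have h2 : s.image Subtype.val ⊆ S₂.filter (· ≤ M) := by
          intro x hx
          obtain ⟨y, hy, rfl⟩ := Finset.mem_image.1 hx
          exact Finset.mem_filter.2 ⟨y.2, (s.image Subtype.val).le_max' _
            (Finset.mem_image.2 ⟨y, hy, rfl⟩)⟩
        have h3 : S₁.filter (· ≤ M) ⊆ s.biUnion t := by
          intro x hx
          refine Finset.mem_biUnion.2 ⟨m, hm, ?_⟩
          rw [ht]
          simpa [hmv] using hx
        calc s.card = (s.image Subtype.val).card := h1
          _ ≤ (S₂.filter (· ≤ M)).card := Finset.card_le_card h2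
          _ ≤ (S₁.filter (· ≤ M)).card := hcount M
          _ ≤ (s.biUnion t).card := Finset.card_le_card h3
    obtain ⟨f, finj, hf⟩ := (Finset.all_card_le_biUnion_card_iff_exists_injective t).1 hall
    refine ⟨fun i => if h : i ∈ S₂ then f ⟨i, h⟩ else i, ?_, ?_⟩
    · intro a ha b hb hab
      simp only [Finset.mem_coe] at ha hb
      simp only [dif_pos ha, dif_pos hb] at hab
      exact Subtype.ext_iff.1 (finj hab)
    · intro i hi
      have := hf ⟨i, hi⟩
      rw [ht] at this
      simp only [Finset.mem_filter] at this
      simp only [dif_pos hi]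
      exact this

lemma count_sdiff_eq {n : ℕ} (S S' : Finset (Fin n)) (h : S' ⊆ S) (k : Fin n) :
    ((S \ S').filter (· ≤ k)).card
      = (S.filter (· ≤ k)).card - (S'.filter (· ≤ k)).card := by
  have heq : (S \ S').filter (· ≤ k) = S.filter (· ≤ k) \ S'.filter (· ≤ k) := by
    ext x
    simp only [Finset.mem_filter, Finset.mem_sdiff]
    tauto
  rw [heq, Finset.card_sdiff_of_subset (Finset.filter_subset_filter _ h)]

/-- for `S' ⊆ S₁ ∩ S₂` with `S₁ ≠ S₂`, `S₁ ▷ S₂ ↔ (S₁ \ S') ▷ (S₂ \ S')`. -/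
theorem dominates_sdiff_iff {n : ℕ} (S₁ S₂ : Finset (Fin n)) (hne : S₁ ≠ S₂)
    (S' : Finset (Fin n)) (hS' : S' ⊆ S₁ ∩ S₂) :
    Dominates S₁ S₂ ↔ Dominates (S₁ \ S') (S₂ \ S') := by
  have h1 : S' ⊆ S₁ := hS'.trans Finset.inter_subset_left
  have h2 : S' ⊆ S₂ := hS'.trans Finset.inter_subset_right
  rw [dominates_iff_count, dominates_iff_count]
  constructor
  · intro h k
    rw [count_sdiff_eq _ _ h1, count_sdiff_eq _ _ h2]
    have hc1 : (S'.filter (· ≤ k)).card ≤ (S₁.filter (· ≤ k)).card :=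
      Finset.card_le_card (Finset.filter_subset_filter _ h1)
    have hc2 : (S'.filter (· ≤ k)).card ≤ (S₂.filter (· ≤ k)).card :=
      Finset.card_le_card (Finset.filter_subset_filter _ h2)
    have := h k
    omega
  · intro h k
    have := h k
    rw [count_sdiff_eq _ _ h1, count_sdiff_eq _ _ h2] at this
    have hc1 : (S'.filter (· ≤ k)).card ≤ (S₁.filter (· ≤ k)).card :=
      Finset.card_le_card (Finset.filter_subset_filter _ h1)
    have hc2 : (S'.filter (· ≤ k)).card ≤ (S₂.filter (· ≤ k)).card :=
      Finset.card_le_card (Finset.filter_subset_filter _ h2)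
    omega
end

section
/- Let K be a TOMKS, let {C₁,…,C_k} be a multi-cover for K, and let α ∈ ℤ^n be an MCI coefficient vector for {C₁,…,C_k}. If T ⊆ C \ C₀ satisfies T ∉ {C̄₁,…,C̄_k} and T ▷ C̄_{h'} for some h' ∈ {1,…,k}, then α(T) > α(C̄_{h'}). -/
open Finset

/-- if `T ⊆ C \ C₀`, `T ∉ {C̄₁,…,C̄_k}` and `T ▷ C̄_{h'}`,
then `α(T) > α(C̄_{h'})` for any MCI coefficient vector `α`. -/
theorem mci_key_prop {m n k : ℕ} (hk : 0 < k)
    (A : Fin m → Fin n → ℕ) (b : Fin m → ℕ) (hA : ColsOrdered A)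
    (C : Fin k → Finset (Fin n)) (hmc : MultiCover A b C)
    (α : Fin n → ℤ) (hα : IsMCICoeff C α)
    (T : Finset (Fin n)) (hT : T ⊆ unionC C \ interC C)
    (hTne : ∀ h : Fin k, T ≠ unionC C \ C h)
    (h' : Fin k) (hdom : Dominates T (unionC C \ C h')) :
    ∑ i ∈ unionC C \ C h', α i < ∑ i ∈ T, α i := by
  classical
  obtain ⟨f, hfinj, hf⟩ := hdom
  set U : Finset (Fin n) := unionC C with hU
  set C₀ : Finset (Fin n) := interC C with hC₀def
  set D : Finset (Fin n) := U \ C h' with hDdef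
  have hC0sub : ∀ h : Fin k, C₀ ⊆ C h := fun h =>
    Finset.le_iff_subset.mp (Finset.inf_le (Finset.mem_univ h))
  have hDsub : D ⊆ U \ C₀ := by
    intro i hi
    rw [Finset.mem_sdiff] at hi ⊢
    exact ⟨hi.1, fun hc => hi.2 (hC0sub h' hc)⟩
  -- Step 1: α ≥ 1 on U \ C₀
  have hposN : ∀ N : ℕ, ∀ i : Fin n, i ∈ U \ C₀ → n - i.val ≤ N → (1:ℤ) ≤ α i := by
    intro N
    induction N with
    | zero => intro i hi hle; exact absurd hle (by have := i.isLt; omega)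
    | succ N ih =>
      intro i hi hle
      by_cases hmax : ∀ j ∈ U \ C₀, j ≤ i
      · rw [hα.2.1 i hi hmax]
      · push_neg at hmax
        obtain ⟨j, hj, hij⟩ := hmax
        have hiU : i ∈ U := (Finset.mem_sdiff.mp hi).1
        obtain ⟨h, -, hih⟩ := Finset.mem_sup.mp hiU
        have h3 := hα.2.2.1 i hi ⟨j, hj, hij⟩ h hih
        have hS : (0:ℤ) ≤ fmax ((U \ C h).filter (fun ℓ => i < ℓ)) α := by
          unfold fmax
          split
          · rename_i hne
            obtain ⟨a, ha⟩ := hne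
            have haf := Finset.mem_filter.mp ha
            have haU : a ∈ U \ C₀ := by
              have h1 : a ∈ U \ C h := haf.1
              rw [Finset.mem_sdiff] at h1 ⊢
              exact ⟨h1.1, fun hc => h1.2 (hC0sub h hc)⟩
            have h1 : (1:ℤ) ≤ α a := by
              apply ih a haU
              have : i < a := haf.2
              have : i.val < a.val := this
              omega
            have := Finset.le_sup' α ha
            linarith
          · exact le_refl 0
        linarith
  have hpos : ∀ i ∈ U \ C₀, (1:ℤ) ≤ α i := fun i hi => hposN n i hi (by omega)
  -- Step 2: key inequality
  have hkey : ∀ j, j ∈ U \ C₀ → j ∈ C h' → ∀ i ∈ D, j < i → 1 + α i ≤ α j := by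
    intro j hj hjC i hiD hji
    have hiUC₀ : i ∈ U \ C₀ := hDsub hiD
    have h3 := hα.2.2.1 j hj ⟨i, hiUC₀, hji⟩ h' hjC
    have himem : i ∈ (U \ C h').filter (fun ℓ => j < ℓ) :=
      Finset.mem_filter.mpr ⟨hiD, hji⟩
    have hle : α i ≤ fmax ((U \ C h').filter (fun ℓ => j < ℓ)) α := by
      unfold fmax
      rw [dif_pos ⟨i, himem⟩]
      exact Finset.le_sup' α himem
    linarith
  -- Step 3: prefix counts
  have hprefD : ∀ ℓ : Fin n, (D.filter (· ≤ ℓ)).card ≤ (T.filter (· ≤ ℓ)).card := by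
    intro ℓ
    apply Finset.card_le_card_of_injOn f
    · intro x hx
      rw [Finset.mem_coe, Finset.mem_filter] at hx ⊢
      obtain ⟨hfx, hfx'⟩ := hf x hx.1
      exact ⟨hfx, le_trans hfx' hx.2⟩
    · exact hfinj.mono (by intro x hx; exact (Finset.mem_filter.mp hx).1)
  have hpref : ∀ ℓ : Fin n,
      ((D \ T).filter (· ≤ ℓ)).card ≤ ((T \ D).filter (· ≤ ℓ)).card := by
    intro ℓ
    have e1 : (D \ T).filter (· ≤ ℓ) = D.filter (· ≤ ℓ) \ T.filter (· ≤ ℓ) := by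
      ext x
      simp only [Finset.mem_filter, Finset.mem_sdiff]
      tauto
    have e2 : (T \ D).filter (· ≤ ℓ) = T.filter (· ≤ ℓ) \ D.filter (· ≤ ℓ) := by
      ext x
      simp only [Finset.mem_filter, Finset.mem_sdiff]
      tauto
    have c1 := Finset.card_sdiff_add_card_inter (D.filter (· ≤ ℓ)) (T.filter (· ≤ ℓ))
    have c2 := Finset.card_sdiff_add_card_inter (T.filter (· ≤ ℓ)) (D.filter (· ≤ ℓ))
    have c3 : (D.filter (· ≤ ℓ) ∩ T.filter (· ≤ ℓ)).card
        = (T.filter (· ≤ ℓ) ∩ D.filter (· ≤ ℓ)).card := by rw [Finset.inter_comm]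
    have := hprefD ℓ
    rw [e1, e2]
    omega
  -- Step 4: Hall's theorem to get injection from D \ T into T \ D
  have hall : ∃ g : Fin n → Fin n, Function.Injective g ∧
      ∀ x, g x ∈ (if x ∈ D \ T then (T \ D).filter (· ≤ x) else Finset.univ) := by
    rw [← Finset.all_card_le_biUnion_card_iff_exists_injective]
    intro s
    by_cases hs : ∀ x ∈ s, x ∈ D \ T
    · rcases s.eq_empty_or_nonempty with rfl | hsne
      · simp
      · have hMmem := s.max'_mem hsne
        set M := s.max' hsne with hM
        have hsub : s ⊆ (D \ T).filter (· ≤ M) := fun x hx =>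
          Finset.mem_filter.mpr ⟨hs x hx, s.le_max' x hx⟩
        calc s.card ≤ ((D \ T).filter (· ≤ M)).card := Finset.card_le_card hsub
          _ ≤ ((T \ D).filter (· ≤ M)).card := hpref M
          _ ≤ (s.biUnion fun x =>
                (if x ∈ D \ T then (T \ D).filter (· ≤ x) else Finset.univ)).card := by
              apply Finset.card_le_card
              intro y hy
              apply Finset.mem_biUnion.mpr
              exact ⟨M, hMmem, by rw [if_pos (hs M hMmem)]; exact hy⟩
    · push_neg at hs
      obtain ⟨x, hxs, hx⟩ := hs
      have : (Finset.univ : Finset (Fin n)) ⊆ s.biUnion fun x =>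
          (if x ∈ D \ T then (T \ D).filter (· ≤ x) else Finset.univ) := by
        intro y _
        apply Finset.mem_biUnion.mpr
        exact ⟨x, hxs, by rw [if_neg hx]; exact Finset.mem_univ y⟩
      calc s.card ≤ (Finset.univ : Finset (Fin n)).card :=
            Finset.card_le_card (Finset.subset_univ s)
        _ ≤ _ := Finset.card_le_card this
  obtain ⟨g, hginj, hg⟩ := hall
  have hgmem : ∀ x ∈ D \ T, g x ∈ T \ D ∧ g x < x := by
    intro x hx
    have := hg x
    rw [if_pos hx] at this
    rw [Finset.mem_filter] at this
    refine ⟨this.1, lt_of_le_of_ne this.2 ?_⟩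
    intro hgx
    have h1 : g x ∉ D := (Finset.mem_sdiff.mp this.1).2
    have h2 : x ∈ D := (Finset.mem_sdiff.mp hx).1
    rw [hgx] at h1
    exact h1 h2
  -- Step 5: the main sum inequality for the symmetric difference
  have hmain : ∑ i ∈ D \ T, α i < ∑ i ∈ T \ D, α i := by
    rcases (D \ T).eq_empty_or_nonempty with hDT | hDT
    · -- D ⊆ T; then T \ D nonempty since T ≠ D
      have hTD : (T \ D).Nonempty := by
        rw [Finset.sdiff_nonempty]
        intro hsub
        apply hTne h'
        apply Finset.Subset.antisymm hsub
        exact Finset.sdiff_eq_empty_iff_subset.mp hDT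
      rw [hDT, Finset.sum_empty]
      apply Finset.sum_pos _ hTD
      intro i hi
      have : i ∈ U \ C₀ := hT (Finset.mem_sdiff.mp hi).1
      have := hpos i this
      linarith
    · have himg : (D \ T).image g ⊆ T \ D := by
        intro y hy
        obtain ⟨x, hx, rfl⟩ := Finset.mem_image.mp hy
        exact (hgmem x hx).1
      have e1 : ∑ x ∈ (D \ T).image g, α x = ∑ x ∈ D \ T, α (g x) :=
        Finset.sum_image (fun x _ y _ hxy => hginj hxy)
      have e2 : ∑ x ∈ (D \ T).image g, α x ≤ ∑ x ∈ T \ D, α x := by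
        apply Finset.sum_le_sum_of_subset_of_nonneg himg
        intro i hi _
        have : i ∈ U \ C₀ := hT (Finset.mem_sdiff.mp hi).1
        have := hpos i this
        linarith
      have e3 : ∑ x ∈ D \ T, (1 + α x) ≤ ∑ x ∈ D \ T, α (g x) := by
        apply Finset.sum_le_sum
        intro x hx
        obtain ⟨hgx1, hgx2⟩ := hgmem x hx
        have hgT : g x ∈ T := (Finset.mem_sdiff.mp hgx1).1
        have hgUC₀ : g x ∈ U \ C₀ := hT hgT
        have hgCh' : g x ∈ C h' := by
          have h1 : g x ∉ D := (Finset.mem_sdiff.mp hgx1).2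
          have h2 : g x ∈ U := (Finset.mem_sdiff.mp hgUC₀).1
          by_contra hc
          exact h1 (Finset.mem_sdiff.mpr ⟨h2, hc⟩)
        exact hkey (g x) hgUC₀ hgCh' x (Finset.mem_sdiff.mp hx).1 hgx2
      have e4 : ∑ x ∈ D \ T, (1 + α x) = (D \ T).card + ∑ x ∈ D \ T, α x := by
        rw [Finset.sum_add_distrib, Finset.sum_const]
        simp
      have hcard : 1 ≤ (D \ T).card := Finset.card_pos.mpr hDT
      have hcard' : (1:ℤ) ≤ ((D \ T).card : ℤ) := by exact_mod_cast hcard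
      linarith
  -- Step 6: conclude
  have s1 : ∑ i ∈ T ∩ D, α i + ∑ i ∈ T \ D, α i = ∑ i ∈ T, α i :=
    Finset.sum_inter_add_sum_sdiff T D α
  have s2 : ∑ i ∈ D ∩ T, α i + ∑ i ∈ D \ T, α i = ∑ i ∈ D, α i :=
    Finset.sum_inter_add_sum_sdiff D T α
  have s3 : ∑ i ∈ T ∩ D, α i = ∑ i ∈ D ∩ T, α i := by rw [Finset.inter_comm]
  have : ∑ i ∈ D, α i < ∑ i ∈ T, α i := by linarith
  exact this
end

section
/- Let K = {x ∈ {0,1}^n : Ax ≤ b} be a TOMKS, let {C₁,…,C_k} be a multi-cover for K, let α ∈ ℤ^n be an MCI coefficient vector for {C₁,…,C_k}, and set β := max_{h∈{1,…,k}} α(C_h) − 1. Then every x ∈ {0,1}^n with Ax ≤ b satisfies Σ_{i=1}^n α_i x_i ≤ β; that is, the multi-cover inequality αᵀx ≤ β is valid for K. -/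
open Finset

lemma dom_cover {m n : ℕ} {A : Fin m → Fin n → ℕ} {b : Fin m → ℕ} (hA : ColsOrdered A)
    {S₁ S₂ : Finset (Fin n)} (hd : Dominates S₁ S₂) (hc : IsCover A b S₂) : IsCover A b S₁ := by
  obtain ⟨f, hinj, hf⟩ := hd
  obtain ⟨j, hj⟩ := hc
  refine ⟨j, lt_of_lt_of_le hj ?_⟩
  calc ∑ i ∈ S₂, A j i ≤ ∑ i ∈ S₂, A j (f i) :=
        Finset.sum_le_sum (fun i hi => hA j (f i) i (hf i hi).2)
    _ = ∑ i ∈ S₂.image f, A j i := (Finset.sum_image (fun a ha b hb hab => hinj ha hb hab)).symm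
    _ ≤ ∑ i ∈ S₁, A j i := Finset.sum_le_sum_of_subset (by
        intro i hi
        obtain ⟨a, ha, rfl⟩ := Finset.mem_image.1 hi
        exact (hf a ha).1)

/-- From a domination witness, get an injection on `T \ D` into `D \ T` that strictly decreases. -/
lemma dom_strict {n : ℕ} {D T : Finset (Fin n)} (hd : Dominates D T) :
    ∃ g : Fin n → Fin n, Set.InjOn g ((T \ D : Finset (Fin n)) : Set (Fin n)) ∧
      ∀ i ∈ T \ D, g i ∈ D \ T ∧ g i < i := by
  obtain ⟨f, hinj, hf⟩ := hd
  -- induct on the number of non-fixed points in T ∩ D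
  suffices H : ∀ (c : ℕ) (f : Fin n → Fin n), Set.InjOn f (T : Set (Fin n)) →
      (∀ i ∈ T, f i ∈ D ∧ f i ≤ i) →
      ((T ∩ D).filter (fun i => f i ≠ i)).card ≤ c →
      ∃ g : Fin n → Fin n, Set.InjOn g ((T \ D : Finset (Fin n)) : Set (Fin n)) ∧
        ∀ i ∈ T \ D, g i ∈ D \ T ∧ g i < i by
    exact H _ f hinj hf le_rfl
  intro c
  induction c with
  | zero =>
    intro f hinj hf hcard
    have hfix : ∀ i ∈ T ∩ D, f i = i := by
      intro i hi
      by_contra hne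
      have : i ∈ (T ∩ D).filter (fun i => f i ≠ i) := Finset.mem_filter.2 ⟨hi, hne⟩
      simp [Finset.card_eq_zero.1 (Nat.le_zero.1 hcard)] at this
    refine ⟨f, hinj.mono (by intro a ha; simp only [Finset.coe_sdiff] at ha; exact ha.1), ?_⟩
    intro i hi
    rw [Finset.mem_sdiff] at hi
    have hfi := hf i hi.1
    have hne : f i ≠ i := fun h => hi.2 (h ▸ hfi.1)
    refine ⟨Finset.mem_sdiff.2 ⟨hfi.1, ?_⟩, lt_of_le_of_ne hfi.2 hne⟩
    -- f i ∉ T : else f i is a fixed point in T ∩ D, contradicting injectivity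
    intro hfiT
    have : f (f i) = f i := hfix (f i) (Finset.mem_inter.2 ⟨hfiT, hfi.1⟩)
    exact hne (hinj hfiT hi.1 this)
  | succ c ih =>
    intro f hinj hf hcard
    by_cases hne : ((T ∩ D).filter (fun i => f i ≠ i)).Nonempty
    · obtain ⟨i, hi⟩ := hne
      rw [Finset.mem_filter, Finset.mem_inter] at hi
      obtain ⟨⟨hiT, hiD⟩, hifix⟩ := hi
      by_cases hex : ∃ i' ∈ T, i' ≠ i ∧ f i' = i
      · obtain ⟨i', hi'T, hi'ne, hi'⟩ := hex
        set f' := f ∘ Equiv.swap i i' with hf'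
        have hfi' : ∀ a, f' a = if a = i then i else if a = i' then f i else f a := by
          intro a
          by_cases h1 : a = i
          · rw [if_pos h1, hf']; simp only [Function.comp_apply, h1, Equiv.swap_apply_left, hi']
          · by_cases h2 : a = i'
            · rw [if_neg h1, if_pos h2, hf']
              simp only [Function.comp_apply, h2, Equiv.swap_apply_right]
            · rw [if_neg h1, if_neg h2, hf']
              simp only [Function.comp_apply, Equiv.swap_apply_of_ne_of_ne h1 h2]
        have hinj' : Set.InjOn f' (T : Set (Fin n)) := by
          intro a ha b hb hab
          have hswap : ∀ x : Fin n, x ∈ (T : Set (Fin n)) → Equiv.swap i i' x ∈ (T : Set (Fin n)) := by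
            intro x hx
            rcases eq_or_ne x i with rfl | h1
            · simpa [Equiv.swap_apply_left] using hi'T
            rcases eq_or_ne x i' with rfl | h2
            · simpa [Equiv.swap_apply_right] using hiT
            · simpa [Equiv.swap_apply_of_ne_of_ne h1 h2] using hx
          exact (Equiv.swap i i').injective (hinj (hswap a ha) (hswap b hb) hab)
        have hile : i ≤ i' := hi' ▸ (hf i' hi'T).2
        have hprop : ∀ a ∈ T, f' a ∈ D ∧ f' a ≤ a := by
          intro a ha
          rw [hfi' a]
          by_cases h1 : a = i
          · rw [if_pos h1, h1]; exact ⟨hiD, le_rfl⟩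
          · by_cases h2 : a = i'
            · rw [if_neg h1, if_pos h2, h2]
              exact ⟨(hf i hiT).1, le_trans (hf i hiT).2 hile⟩
            · rw [if_neg h1, if_neg h2]; exact hf a ha
        have hcard' : ((T ∩ D).filter (fun a => f' a ≠ a)).card ≤ c := by
          have hsub : (T ∩ D).filter (fun a => f' a ≠ a) ⊆
              ((T ∩ D).filter (fun a => f a ≠ a)).erase i := by
            intro a ha
            rw [Finset.mem_filter] at ha
            rw [Finset.mem_erase, Finset.mem_filter]
            have hai : a ≠ i := by
              intro h
              exact ha.2 (by rw [hfi', if_pos h, h])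
            refine ⟨hai, ha.1, ?_⟩
            by_cases h2 : a = i'
            · rw [h2, hi']; exact Ne.symm hi'ne
            · intro h; exact ha.2 (by rw [hfi', if_neg hai, if_neg h2]; exact h)
          calc ((T ∩ D).filter (fun a => f' a ≠ a)).card
              ≤ (((T ∩ D).filter (fun a => f a ≠ a)).erase i).card := Finset.card_le_card hsub
            _ = ((T ∩ D).filter (fun a => f a ≠ a)).card - 1 :=
                Finset.card_erase_of_mem (Finset.mem_filter.2 ⟨Finset.mem_inter.2 ⟨hiT, hiD⟩, hifix⟩)
            _ ≤ c := by omega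
        exact ih f' hinj' hprop hcard'
      · push_neg at hex
        set f' := Function.update f i i with hf'
        have hinj' : Set.InjOn f' (T : Set (Fin n)) := by
          intro a ha b hb hab
          by_cases h1 : a = i <;> by_cases h2 : b = i
          · rw [h1, h2]
          · rw [hf', h1, Function.update_self, Function.update_of_ne h2] at hab
            exact absurd hab.symm (hex b hb h2)
          · rw [hf', h2, Function.update_self, Function.update_of_ne h1] at hab
            exact absurd (h2 ▸ hab) (hex a ha h1)
          · rw [hf', Function.update_of_ne h1, Function.update_of_ne h2] at hab
            exact hinj ha hb hab
        have hprop : ∀ a ∈ T, f' a ∈ D ∧ f' a ≤ a := by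
          intro a ha
          by_cases h1 : a = i
          · rw [hf', h1, Function.update_self]; exact ⟨hiD, h1 ▸ le_rfl⟩
          · rw [hf', Function.update_of_ne h1]; exact hf a ha
        have hcard' : ((T ∩ D).filter (fun a => f' a ≠ a)).card ≤ c := by
          have hsub : (T ∩ D).filter (fun a => f' a ≠ a) ⊆
              ((T ∩ D).filter (fun a => f a ≠ a)).erase i := by
            intro a ha
            rw [Finset.mem_filter] at ha
            rw [Finset.mem_erase, Finset.mem_filter]
            have hai : a ≠ i := by
              intro h; subst h; exact ha.2 (by rw [hf', Function.update_self])
            exact ⟨hai, ha.1, by rw [hf', Function.update_of_ne hai] at ha; exact ha.2⟩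
          calc ((T ∩ D).filter (fun a => f' a ≠ a)).card
              ≤ (((T ∩ D).filter (fun a => f a ≠ a)).erase i).card := Finset.card_le_card hsub
            _ = ((T ∩ D).filter (fun a => f a ≠ a)).card - 1 :=
                Finset.card_erase_of_mem (Finset.mem_filter.2 ⟨Finset.mem_inter.2 ⟨hiT, hiD⟩, hifix⟩)
            _ ≤ c := by omega
        exact ih f' hinj' hprop hcard'
    · rw [Finset.not_nonempty_iff_eq_empty] at hne
      exact ih f hinj hf (by rw [hne]; simp)

lemma interC_subset {n k : ℕ} (C : Fin k → Finset (Fin n)) (h : Fin k) :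
    interC C ⊆ C h := Finset.le_iff_subset.1 (Finset.inf_le (mem_univ h))

lemma subset_unionC {n k : ℕ} (C : Fin k → Finset (Fin n)) (h : Fin k) :
    C h ⊆ unionC C := Finset.le_iff_subset.1 (Finset.le_sup (mem_univ h))

lemma mem_unionC {n k : ℕ} {C : Fin k → Finset (Fin n)} {i : Fin n} :
    i ∈ unionC C ↔ ∃ h, i ∈ C h := by
  simp [unionC, Finset.mem_sup]

lemma sdiff_inter_subset {n k : ℕ} (C : Fin k → Finset (Fin n)) (h : Fin k) :
    unionC C \ C h ⊆ unionC C \ interC C :=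
  Finset.sdiff_subset_sdiff le_rfl (interC_subset C h)

lemma alpha_pos {n k : ℕ} {C : Fin k → Finset (Fin n)} {α : Fin n → ℤ}
    (hα : IsMCICoeff C α) : ∀ i ∈ unionC C, 1 ≤ α i := by
  have hdiff : ∀ i ∈ unionC C \ interC C, 1 ≤ α i := by
    by_contra hcon
    push_neg at hcon
    obtain ⟨i₀, hi₀, hαi₀⟩ := hcon
    set B := (unionC C \ interC C).filter (fun i => α i < 1) with hB
    have hBne : B.Nonempty := ⟨i₀, Finset.mem_filter.2 ⟨hi₀, hαi₀⟩⟩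
    set i := B.max' hBne with hi
    have hiB : i ∈ B := B.max'_mem hBne
    rw [hB, Finset.mem_filter] at hiB
    obtain ⟨hiU, hαi⟩ := hiB
    -- i is in some C h
    obtain ⟨h, hih⟩ := mem_unionC.1 (Finset.mem_sdiff.1 hiU).1
    by_cases hmax : ∀ j ∈ unionC C \ interC C, j ≤ i
    · have := hα.2.1 i hiU hmax
      omega
    · push_neg at hmax
      obtain ⟨j, hjU, hji⟩ := hmax
      have hij : i < j := hji
      have hkey := hα.2.2.1 i hiU ⟨j, hjU, hij⟩ h hih
      have hfm : 0 ≤ fmax ((unionC C \ C h).filter (fun ℓ => i < ℓ)) α := by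
        rw [fmax]
        split
        · rename_i hne
          obtain ⟨ℓ, hℓ⟩ := hne
          refine le_trans ?_ (Finset.le_sup' α hℓ)
          rw [Finset.mem_filter] at hℓ
          have hℓU : ℓ ∈ unionC C \ interC C := sdiff_inter_subset C h hℓ.1
          -- ℓ > i = max of B, so ℓ ∉ B, so 1 ≤ α ℓ
          by_contra hneg
          push_neg at hneg
          have hℓB : ℓ ∈ B := Finset.mem_filter.2 ⟨hℓU, by omega⟩
          have := B.le_max' ℓ hℓB
          rw [← hi] at this
          exact absurd (lt_of_lt_of_le hℓ.2 this) (lt_irrefl i)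
        · exact le_rfl
      omega
  intro i hiU
  by_cases hiI : i ∈ interC C
  · obtain ⟨h, hkey⟩ := hα.2.2.2 i hiI
    have hsum : 0 ≤ ∑ ℓ ∈ (unionC C \ C h).filter (fun ℓ => i < ℓ), α ℓ := by
      refine Finset.sum_nonneg (fun ℓ hℓ => ?_)
      rw [Finset.mem_filter] at hℓ
      exact le_trans zero_le_one (hdiff ℓ (sdiff_inter_subset C h hℓ.1))
    have := le_trans (le_max_right _ _) hkey
    omega
  · exact hdiff i (Finset.mem_sdiff.2 ⟨hiU, hiI⟩)


lemma univ_nonempty_k {k : ℕ} (hk : 0 < k) : (Finset.univ : Finset (Fin k)).Nonempty :=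
  ⟨⟨0, hk⟩, mem_univ _⟩

lemma key_base {m n k : ℕ} (hk : 0 < k) {A : Fin m → Fin n → ℕ} {b : Fin m → ℕ}
    (hA : ColsOrdered A) {C : Fin k → Finset (Fin n)} (hmc : MultiCover A b C)
    {α : Fin n → ℤ} (hα : IsMCICoeff C α) {S : Finset (Fin n)}
    (hS : S ⊆ unionC C) (hI : interC C ⊆ S) (hnc : ¬ IsCover A b S) :
    ∑ i ∈ S, α i ≤ univ.sup' (univ_nonempty_k hk) (fun h => ∑ i ∈ C h, α i) - 1 := by
  set T := S \ interC C with hT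
  by_cases hTh : ∃ h, T = C h \ interC C
  · obtain ⟨h, hTh⟩ := hTh
    have hSCh : S = C h := by
      rw [← Finset.sdiff_union_of_subset hI, ← hT, hTh,
        Finset.sdiff_union_of_subset (interC_subset C h)]
    exact absurd (hSCh ▸ hmc.1 h) hnc
  · push_neg at hTh
    have hTsub : T ⊆ unionC C \ interC C := Finset.sdiff_subset_sdiff hS Finset.Subset.rfl
    obtain ⟨h, hdom⟩ := hmc.2 T hTsub hTh
    set D := C h \ interC C with hD
    rcases hdom with hdom | hdom
    · -- `T` dominates `C h \ C₀`, hence `S` dominates `C h`, so `S` is a cover: contradiction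
      exfalso
      obtain ⟨f, hinj, hf⟩ := hdom
      refine hnc (dom_cover hA ⟨fun i => if i ∈ D then f i else i, ?_, ?_⟩ (hmc.1 h))
      · intro a ha b hb hab
        simp only [Finset.mem_coe] at ha hb
        change (if a ∈ D then f a else a) = (if b ∈ D then f b else b) at hab
        have hkey : ∀ c ∈ C h, c ∉ D → c ∈ interC C := by
          intro c hc hcD
          by_contra hcI
          exact hcD (Finset.mem_sdiff.2 ⟨hc, hcI⟩)
        by_cases h1 : a ∈ D <;> by_cases h2 : b ∈ D
        · rw [if_pos h1, if_pos h2] at hab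
          exact hinj (by simpa using h1) (by simpa using h2) hab
        · rw [if_pos h1, if_neg h2] at hab
          have hfa : f a ∈ T := (hf a (by simpa using h1)).1
          have : f a ∉ interC C := (Finset.mem_sdiff.1 (hTsub hfa)).2
          exact absurd (hab ▸ hkey b hb h2) this
        · rw [if_neg h1, if_pos h2] at hab
          have hfb : f b ∈ T := (hf b (by simpa using h2)).1
          have : f b ∉ interC C := (Finset.mem_sdiff.1 (hTsub hfb)).2
          exact absurd (hab ▸ hkey a ha h1) this
        · rw [if_neg h1, if_neg h2] at hab
          exact hab
      · intro a ha
        show (if a ∈ D then f a else a) ∈ S ∧ (if a ∈ D then f a else a) ≤ a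
        by_cases h1 : a ∈ D
        · rw [if_pos h1]
          have := hf a (by simpa using h1)
          exact ⟨Finset.sdiff_subset this.1, this.2⟩
        · rw [if_neg h1]
          have haI : a ∈ interC C := by
            by_contra haI
            exact h1 (Finset.mem_sdiff.2 ⟨ha, haI⟩)
          exact ⟨hI haI, le_rfl⟩
    · -- `C h \ C₀` dominates `T`
      obtain ⟨g, ginj, hg⟩ := dom_strict hdom
      have hTD : T ≠ D := hTh h
      have step1 : ∀ i ∈ T \ D, 1 + α i ≤ α (g i) := by
        intro i hi
        obtain ⟨hgiD, hgilt⟩ := hg i hi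
        rw [Finset.mem_sdiff] at hi
        have hiT := hi.1
        have hiU : i ∈ unionC C \ interC C := hTsub hiT
        have hgiCh : g i ∈ C h := (Finset.mem_sdiff.1 ((Finset.mem_sdiff.1 hgiD).1)).1
        have hgiU : g i ∈ unionC C \ interC C := by
          have hgiI : g i ∉ interC C := (Finset.mem_sdiff.1 ((Finset.mem_sdiff.1 hgiD).1)).2
          exact Finset.mem_sdiff.2 ⟨subset_unionC C h hgiCh, hgiI⟩
        have hkey := hα.2.2.1 (g i) hgiU ⟨i, hiU, hgilt⟩ h hgiCh
        have hiF : i ∈ (unionC C \ C h).filter (fun ℓ => g i < ℓ) := by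
          rw [Finset.mem_filter, Finset.mem_sdiff]
          have hiCh : i ∉ C h := by
            intro hiCh
            exact hi.2 (Finset.mem_sdiff.2 ⟨hiCh, (Finset.mem_sdiff.1 hiU).2⟩)
          exact ⟨⟨(Finset.mem_sdiff.1 hiU).1, hiCh⟩, hgilt⟩
        have hle : α i ≤ fmax ((unionC C \ C h).filter (fun ℓ => g i < ℓ)) α := by
          rw [fmax, dif_pos ⟨i, hiF⟩]
          exact Finset.le_sup' α hiF
        omega
      have step2 : (↑(T \ D).card : ℤ) + ∑ i ∈ T \ D, α i ≤ ∑ i ∈ D \ T, α i := by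
        have e1 : ∑ i ∈ T \ D, ((1 : ℤ) + α i) ≤ ∑ i ∈ T \ D, α (g i) :=
          Finset.sum_le_sum step1
        have e2 : ∑ i ∈ T \ D, α (g i) = ∑ i ∈ (T \ D).image g, α i :=
          (Finset.sum_image (fun a ha b hb hab =>
            ginj (by simpa using ha) (by simpa using hb) hab)).symm
        have e3 : ∑ i ∈ (T \ D).image g, α i ≤ ∑ i ∈ D \ T, α i := by
          refine Finset.sum_le_sum_of_subset_of_nonneg ?_ ?_
          · intro i hi
            obtain ⟨a, ha, rfl⟩ := Finset.mem_image.1 hi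
            exact (hg a ha).1
          · intro i hi _
            refine le_trans zero_le_one (alpha_pos hα i ?_)
            exact subset_unionC C h (Finset.mem_sdiff.1 ((Finset.mem_sdiff.1 hi).1)).1
        rw [Finset.sum_add_distrib, Finset.sum_const, nsmul_eq_mul, mul_one] at e1
        omega
      have step3 : ∑ i ∈ T, α i ≤ ∑ i ∈ D, α i - 1 := by
        have e1 : ∑ i ∈ T ∩ D, α i + ∑ i ∈ T \ D, α i = ∑ i ∈ T, α i :=
          Finset.sum_inter_add_sum_sdiff T D α
        have e2 : ∑ i ∈ D ∩ T, α i + ∑ i ∈ D \ T, α i = ∑ i ∈ D, α i :=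
          Finset.sum_inter_add_sum_sdiff D T α
        rw [Finset.inter_comm] at e2
        by_cases hne : (T \ D).Nonempty
        · have hc : 1 ≤ ((T \ D).card : ℤ) := by
            have := Finset.card_pos.2 hne
            omega
          have hTDnn : 0 ≤ ∑ i ∈ T ∩ D, α i - ∑ i ∈ T ∩ D, α i := by omega
          have hmono : ∑ i ∈ T ∩ D, α i ≤ ∑ i ∈ T ∩ D, α i := le_rfl
          omega
        · rw [Finset.not_nonempty_iff_eq_empty, Finset.sdiff_eq_empty_iff_subset] at hne
          have hDT : (D \ T).Nonempty := by
            rw [Finset.sdiff_nonempty]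
            intro hsub
            exact hTD (Finset.Subset.antisymm hne hsub)
          have hcard : (↑(D \ T).card : ℤ) ≤ ∑ i ∈ D \ T, α i := by
            have := Finset.sum_le_sum (f := fun _ : Fin n => (1 : ℤ)) (g := α)
              (s := D \ T) (fun i hi => alpha_pos hα i
                (subset_unionC C h (Finset.mem_sdiff.1 ((Finset.mem_sdiff.1 hi).1)).1))
            rwa [Finset.sum_const, nsmul_eq_mul, mul_one] at this
          have h1c : 1 ≤ ((D \ T).card : ℤ) := by
            have := Finset.card_pos.2 hDT
            omega
          have hTempty : ∑ i ∈ T \ D, α i = 0 := by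
            rw [Finset.sdiff_eq_empty_iff_subset.2 hne, Finset.sum_empty]
          omega
      have e4 : ∑ i ∈ T, α i + ∑ i ∈ interC C, α i = ∑ i ∈ S, α i :=
        Finset.sum_sdiff hI
      have e5 : ∑ i ∈ D, α i + ∑ i ∈ interC C, α i = ∑ i ∈ C h, α i :=
        Finset.sum_sdiff (interC_subset C h)
      have e6 : ∑ i ∈ C h, α i ≤ univ.sup' (univ_nonempty_k hk) (fun h => ∑ i ∈ C h, α i) :=
        Finset.le_sup' (fun h => ∑ i ∈ C h, α i) (mem_univ h)
      omega

lemma key_step {m n k : ℕ} (hk : 0 < k) {A : Fin m → Fin n → ℕ} {b : Fin m → ℕ}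
    (hA : ColsOrdered A) {C : Fin k → Finset (Fin n)} (hmc : MultiCover A b C)
    {α : Fin n → ℤ} (hα : IsMCICoeff C α) :
    ∀ (d : ℕ) (S : Finset (Fin n)), S ⊆ unionC C → ¬ IsCover A b S →
      (interC C \ S).card ≤ d →
      ∑ i ∈ S, α i ≤ univ.sup' (univ_nonempty_k hk) (fun h => ∑ i ∈ C h, α i) - 1 := by
  intro d
  induction d with
  | zero =>
    intro S hS hnc hcard
    have hI : interC C ⊆ S := by
      rw [← Finset.sdiff_eq_empty_iff_subset]
      exact Finset.card_eq_zero.1 (Nat.le_zero.1 hcard)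
    exact key_base hk hA hmc hα hS hI hnc
  | succ d ih =>
    intro S hS hnc hcard
    by_cases hI : interC C ⊆ S
    · exact key_base hk hA hmc hα hS hI hnc
    · obtain ⟨j, hjI, hjS⟩ := Finset.not_subset.1 hI
      obtain ⟨h, hkey⟩ := hα.2.2.2 j hjI
      have hjCh : j ∈ C h := interC_subset C h hjI
      set L := (S \ C h).filter (fun ℓ => ℓ < j) with hL
      by_cases hLne : L.Nonempty
      · -- swap a small element below j for j
        obtain ⟨ℓ, hℓ⟩ := hLne
        rw [hL, Finset.mem_filter, Finset.mem_sdiff] at hℓ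
        obtain ⟨⟨hℓS, hℓCh⟩, hℓj⟩ := hℓ
        have hℓU : ℓ ∈ (unionC C \ C h).filter (fun i => i < j) := by
          rw [Finset.mem_filter, Finset.mem_sdiff]
          exact ⟨⟨hS hℓS, hℓCh⟩, hℓj⟩
        have hαℓ : α ℓ ≤ α j := by
          have h1 : α ℓ ≤ fmax ((unionC C \ C h).filter (fun i => i < j)) α := by
            rw [fmax, dif_pos ⟨ℓ, hℓU⟩]
            exact Finset.le_sup' α hℓU
          have h2 := le_trans (le_max_left _ _) hkey
          omega
        set S' := insert j (S.erase ℓ) with hS'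
        have hjE : j ∉ S.erase ℓ := fun hmem => hjS (Finset.mem_of_mem_erase hmem)
        have hS'U : S' ⊆ unionC C := by
          rw [hS']
          exact Finset.insert_subset (subset_unionC C h hjCh)
            ((Finset.erase_subset ℓ S).trans hS)
        have hnc' : ¬ IsCover A b S' := by
          intro hcov
          obtain ⟨r, hr⟩ := hcov
          refine hnc ⟨r, lt_of_lt_of_le hr ?_⟩
          rw [hS', Finset.sum_insert hjE, ← Finset.add_sum_erase S (A r) hℓS]
          exact Nat.add_le_add_right (hA r ℓ j (le_of_lt hℓj)) _
        have hcard' : (interC C \ S').card ≤ d := by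
          have hEq : interC C \ S' = (interC C \ S).erase j := by
            ext i
            simp only [hS', Finset.mem_sdiff, Finset.mem_erase, Finset.mem_insert, not_or,
              not_and]
            constructor
            · rintro ⟨hiI, hij, hiS'⟩
              have hiℓ : i ≠ ℓ := by
                rintro rfl
                exact hℓCh (interC_subset C h hiI)
              exact ⟨hij, hiI, hiS' hiℓ⟩
            · rintro ⟨hij, hiI, hiS⟩
              exact ⟨hiI, hij, fun _ hiS' => hiS hiS'⟩
          rw [hEq, Finset.card_erase_of_mem (Finset.mem_sdiff.2 ⟨hjI, hjS⟩)]
          omega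
        have hIH := ih S' hS'U hnc' hcard'
        have hsum : ∑ i ∈ S', α i = α j + (∑ i ∈ S, α i - α ℓ) := by
          rw [hS', Finset.sum_insert hjE]
          have := Finset.add_sum_erase S α hℓS
          omega
        omega
      · -- no element of S \ C h lies below j
        have hsub : S \ C h ⊆ (unionC C \ C h).filter (fun ℓ => j < ℓ) := by
          intro i hi
          rw [Finset.mem_sdiff] at hi
          rw [Finset.mem_filter, Finset.mem_sdiff]
          refine ⟨⟨hS hi.1, hi.2⟩, ?_⟩
          rcases lt_trichotomy i j with hlt | heq | hgt
          · have hmemL : i ∈ L := Finset.mem_filter.2 ⟨Finset.mem_sdiff.2 hi, hlt⟩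
            exact absurd hmemL (fun hm => hLne ⟨i, hm⟩)
          · exact absurd (heq ▸ hjCh) hi.2
          · exact hgt
        have h1 : ∑ i ∈ S \ C h, α i ≤
            ∑ i ∈ (unionC C \ C h).filter (fun ℓ => j < ℓ), α i := by
          refine Finset.sum_le_sum_of_subset_of_nonneg hsub (fun i hi _ => ?_)
          rw [Finset.mem_filter, Finset.mem_sdiff] at hi
          exact le_trans zero_le_one (alpha_pos hα i hi.1.1)
        have h2 : 1 + ∑ i ∈ (unionC C \ C h).filter (fun ℓ => j < ℓ), α i ≤ α j :=
          le_trans (le_max_right _ _) hkey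
        have h3 : ∑ i ∈ S ∩ C h, α i + ∑ i ∈ S \ C h, α i = ∑ i ∈ S, α i :=
          Finset.sum_inter_add_sum_sdiff S (C h) α
        have hjSCh : j ∉ S ∩ C h := fun hmem => hjS (Finset.mem_inter.1 hmem).1
        have h4 : α j + ∑ i ∈ S ∩ C h, α i ≤ ∑ i ∈ C h, α i := by
          have heq : ∑ i ∈ insert j (S ∩ C h), α i = α j + ∑ i ∈ S ∩ C h, α i :=
            Finset.sum_insert hjSCh
          rw [← heq]
          refine Finset.sum_le_sum_of_subset_of_nonneg ?_ (fun i hi _ => ?_)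
          · exact Finset.insert_subset hjCh (Finset.inter_subset_right)
          · exact le_trans zero_le_one (alpha_pos hα i (subset_unionC C h hi))
        have h5 : ∑ i ∈ C h, α i ≤
            univ.sup' (univ_nonempty_k hk) (fun h => ∑ i ∈ C h, α i) :=
          Finset.le_sup' (fun h => ∑ i ∈ C h, α i) (mem_univ h)
        omega

/-- validity of the multi-cover inequality `αᵀx ≤ β` for the TOMKS `K`. -/
theorem mci_valid {m n k : ℕ} (hk : 0 < k)
    (A : Fin m → Fin n → ℕ) (b : Fin m → ℕ) (hA : ColsOrdered A)
    (C : Fin k → Finset (Fin n)) (hmc : MultiCover A b C)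
    (α : Fin n → ℤ) (hα : IsMCICoeff C α)
    (β : ℤ) (hβ : β = fmax (Finset.univ : Finset (Fin k)) (fun h => ∑ i ∈ C h, α i) - 1)
    (x : Fin n → ℤ) (hx : ∀ i, x i = 0 ∨ x i = 1)
    (hfeas : ∀ j, ∑ i, (A j i : ℤ) * x i ≤ (b j : ℤ)) :
    ∑ i, α i * x i ≤ β := by
  classical
  set S := (unionC C).filter (fun i => x i = 1) with hSdef
  have hSsub : S ⊆ unionC C := Finset.filter_subset _ _
  have hsum : ∑ i, α i * x i = ∑ i ∈ S, α i := by
    have h1 : ∑ i, α i * x i = ∑ i ∈ univ.filter (fun i => x i = 1), α i := by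
      rw [Finset.sum_filter]
      refine Finset.sum_congr rfl (fun i _ => ?_)
      rcases hx i with h | h <;> simp [h]
    have h2 : ∑ i ∈ S, α i = ∑ i ∈ univ.filter (fun i => x i = 1), α i := by
      refine Finset.sum_subset ?_ ?_
      · intro i hi
        rw [hSdef, Finset.mem_filter] at hi
        exact Finset.mem_filter.2 ⟨mem_univ i, hi.2⟩
      · intro i hi hiS
        rw [Finset.mem_filter] at hi
        refine hα.1 i (fun hiU => hiS ?_)
        rw [hSdef, Finset.mem_filter]
        exact ⟨hiU, hi.2⟩
    omega
  have hnc : ¬ IsCover A b S := by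
    rintro ⟨r, hr⟩
    have h1 : (∑ i ∈ S, (A r i : ℤ)) ≤ ∑ i, (A r i : ℤ) * x i := by
      have h2 : ∑ i, (A r i : ℤ) * x i = ∑ i ∈ univ.filter (fun i => x i = 1), (A r i : ℤ) := by
        rw [Finset.sum_filter]
        refine Finset.sum_congr rfl (fun i _ => ?_)
        rcases hx i with h | h <;> simp [h]
      rw [h2]
      refine Finset.sum_le_sum_of_subset_of_nonneg ?_ (fun i _ _ => by positivity)
      intro i hi
      rw [hSdef, Finset.mem_filter] at hi
      exact Finset.mem_filter.2 ⟨mem_univ i, hi.2⟩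
    have h3 := le_trans h1 (hfeas r)
    have h4 : ((b r : ℤ)) < ∑ i ∈ S, (A r i : ℤ) := by
      exact_mod_cast hr
    omega
  have hkey := key_step hk hA hmc hα (interC C \ S).card S hSsub hnc le_rfl
  have hβ' : β = univ.sup' (univ_nonempty_k hk) (fun h => ∑ i ∈ C h, α i) - 1 := by
    rw [hβ, fmax, dif_pos (univ_nonempty_k hk)]
  omega
end

section
/- Let K = {x ∈ {0,1}^n : aᵀx ≤ b} be a knapsack set with a a vector of n nonnegative integers and b a nonnegative integer. Let Q ⊆ {1,…,n} be nonempty, let t ∈ {1,…,n} \ Q, and let k be a positive integer with k ≤ |Q|. Assume Σ_{i∈Q} a_i ≤ b and that for every H ⊆ Q with |H| = k, the set H ∪ {t} is a minimal cover for K. Then for every integer r with k ≤ r ≤ |Q| and every T ⊆ Q with |T| = r, the (1,k)-configuration inequality (r − k + 1)·x_t + Σ_{j∈T} x_j ≤ r is valid for K: every x ∈ {0,1}^n with aᵀx ≤ b satisfies it. -/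
open Finset

/-
Fix a feasible 0/1 point `x`. If `x t = 0` the inequality reduces to `∑_{j ∈ T} x j ≤ |T| = r`.
If `x t = 1`, then at most `k - 1` items of `T` are packed: otherwise `k` of them together with `t`
would form one of the covers `H ∪ {t}` inside the support of `x`, contradicting `aᵀx ≤ b`.
Hence the left-hand side is at most `(r - k + 1) + (k - 1) = r`.
-/

section BinaryPoint

variable {n : ℕ} {x : Fin n → ℤ}

lemma sum_eq_card_filter_eq_one (hx : ∀ i, x i = 0 ∨ x i = 1) (T : Finset (Fin n)) :
    ∑ j ∈ T, x j = #(T.filter (x · = 1)) := by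
  rw [natCast_card_filter]
  refine sum_congr rfl fun j _ => ?_
  rcases hx j with h | h <;> simp [h]

lemma sum_le_sum_mul_of_forall_eq_one (a : Fin n → ℕ) (hx : ∀ i, x i = 0 ∨ x i = 1)
    {S : Finset (Fin n)} (hS : ∀ i ∈ S, x i = 1) :
    ∑ i ∈ S, (a i : ℤ) ≤ ∑ i, (a i : ℤ) * x i :=
  calc ∑ i ∈ S, (a i : ℤ) = ∑ i ∈ S, (a i : ℤ) * x i :=
        sum_congr rfl fun i hi => by rw [hS i hi, mul_one]
    _ ≤ ∑ i, (a i : ℤ) * x i :=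
        sum_le_sum_of_subset_of_nonneg (subset_univ S) fun i _ _ => by
          rcases hx i with h | h <;> simp [h]

lemma not_isCoverK_of_forall_eq_one {a : Fin n → ℕ} {b : ℕ} (hx : ∀ i, x i = 0 ∨ x i = 1)
    (hfeas : ∑ i, (a i : ℤ) * x i ≤ b) {S : Finset (Fin n)} (hS : ∀ i ∈ S, x i = 1) :
    ¬ IsCoverK a b S := by
  intro hcover
  have hcover' : (b : ℤ) < ∑ i ∈ S, (a i : ℤ) := by exact_mod_cast hcover
  linarith [sum_le_sum_mul_of_forall_eq_one a hx hS]

lemma card_filter_eq_one_lt_of_isCoverK_insert {a : Fin n → ℕ} {b : ℕ}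
    (hx : ∀ i, x i = 0 ∨ x i = 1) (hfeas : ∑ i, (a i : ℤ) * x i ≤ b)
    {T : Finset (Fin n)} {t : Fin n} {k : ℕ}
    (hcover : ∀ H ⊆ T, #H = k → IsCoverK a b (insert t H)) (hxt : x t = 1) :
    #(T.filter (x · = 1)) < k := by
  by_contra! hk
  obtain ⟨H, hHS, hHk⟩ := exists_subset_card_eq hk
  refine not_isCoverK_of_forall_eq_one hx hfeas ?_
    (hcover H (hHS.trans (filter_subset _ T)) hHk)
  intro i hi
  rcases mem_insert.mp hi with rfl | hi
  · exact hxt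
  · exact (mem_filter.mp (hHS hi)).2

end BinaryPoint

theorem one_k_configuration_valid_general {n : ℕ} (a : Fin n → ℕ) (b : ℕ)
    (Q : Finset (Fin n)) (t : Fin n)
    (k : ℕ)
    (hH : ∀ H ⊆ Q, H.card = k → IsMinimalCoverK a b (insert t H))
    (r : ℕ)
    (T : Finset (Fin n)) (hTQ : T ⊆ Q) (hT : T.card = r)
    (x : Fin n → ℤ) (hx : ∀ i, x i = 0 ∨ x i = 1)
    (hfeas : ∑ i, (a i : ℤ) * x i ≤ (b : ℤ)) :
    ((r : ℤ) - (k : ℤ) + 1) * x t + ∑ j ∈ T, x j ≤ (r : ℤ) := by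
  rw [sum_eq_card_filter_eq_one hx T]
  rcases hx t with hxt | hxt
  · have hpacked : #(T.filter (x · = 1)) ≤ r := hT ▸ card_filter_le T _
    rw [hxt]
    linarith
  · have hfew := card_filter_eq_one_lt_of_isCoverK_insert hx hfeas
      (fun H hHT hHk => (hH H (hHT.trans hTQ) hHk).1) hxt
    rw [hxt]
    omega

/-- validity of the `(1,k)`-configuration inequality for a knapsack set. -/
theorem one_k_configuration_valid {n : ℕ} (a : Fin n → ℕ) (b : ℕ)
    (Q : Finset (Fin n)) (hQ : Q.Nonempty) (t : Fin n) (ht : t ∉ Q)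
    (k : ℕ) (hk : 1 ≤ k) (hkQ : k ≤ Q.card)
    (hQb : ∑ i ∈ Q, a i ≤ b)
    (hH : ∀ H ⊆ Q, H.card = k → IsMinimalCoverK a b (insert t H))
    (r : ℕ) (hr1 : k ≤ r) (hr2 : r ≤ Q.card)
    (T : Finset (Fin n)) (hTQ : T ⊆ Q) (hT : T.card = r)
    (x : Fin n → ℤ) (hx : ∀ i, x i = 0 ∨ x i = 1)
    (hfeas : ∑ i, (a i : ℤ) * x i ≤ (b : ℤ)) :
    ((r : ℤ) - (k : ℤ) + 1) * x t + ∑ j ∈ T, x j ≤ (r : ℤ) :=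
  one_k_configuration_valid_general a b Q t k hH r T hTQ hT x hx hfeas
end

section
/- Let K be a TOMKS, let {C₁,…,C_k} be a multi-cover for K, and let α ∈ ℤ^n be the S-MCI coefficient vector of {C₁,…,C_k}. If i, j ∈ C \ C₀ satisfy α_i = α_j and i ≤ j, then for every h ∈ {1,…,k}, i ∈ C_h implies j ∈ C_h. -/
open Finset

lemma le_fmax {ι : Type*} {S : Finset ι} {g : ι → ℤ} {x : ι} (hx : x ∈ S) : g x ≤ fmax S g := by
  rw [fmax, dif_pos ⟨x, hx⟩]
  exact le_sup' g hx

lemma IsSMCICoeff.lt_of_lt_of_mem_of_notMem {n k : ℕ} {C : Fin k → Finset (Fin n)}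
    {α : Fin n → ℤ} (hα : IsSMCICoeff C α) {i j : Fin n} {h : Fin k}
    (hi : i ∈ unionC C \ interC C) (hj : j ∈ unionC C) (hlt : i < j) (hih : i ∈ C h)
    (hjh : j ∉ C h) : α j < α i := by
  have hj_le : α j ≤ fmax ((unionC C \ C h).filter (fun ℓ => i < ℓ)) α :=
    le_fmax (mem_filter.mpr ⟨mem_sdiff.mpr ⟨hj, hjh⟩, hlt⟩)
  have hh_le := le_fmax (g := fun h => fmax ((unionC C \ C h).filter (fun ℓ => i < ℓ)) α)
    (mem_filter.mpr ⟨mem_univ h, hih⟩ : h ∈ univ.filter (fun h => i ∈ C h))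
  rw [hα.2.1 i hi]
  omega

theorem smci_eq_coeff_mem_general {n k : ℕ}
    (C : Fin k → Finset (Fin n))
    (α : Fin n → ℤ) (hα : IsSMCICoeff C α)
    (i j : Fin n) (hi : i ∈ unionC C \ interC C) (hj : j ∈ unionC C \ interC C)
    (hij : α i = α j) (hle : i ≤ j) (h : Fin k) (hih : i ∈ C h) :
    j ∈ C h := by
  by_contra hjh
  have hlt : i < j := hle.lt_of_ne fun hij' => hjh (hij' ▸ hih)
  exact (hα.lt_of_lt_of_mem_of_notMem hi (mem_sdiff.mp hj).1 hlt hih hjh).ne' hij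

/-- for the S-MCI coefficient vector `α`, if `i, j ∈ C \ C₀`, `α i = α j`
and `i ≤ j`, then `i ∈ C_h` implies `j ∈ C_h`. -/
theorem smci_eq_coeff_mem {m n k : ℕ} (hk : 0 < k)
    (A : Fin m → Fin n → ℕ) (b : Fin m → ℕ) (hA : ColsOrdered A)
    (C : Fin k → Finset (Fin n)) (hmc : MultiCover A b C)
    (α : Fin n → ℤ) (hα : IsSMCICoeff C α)
    (i j : Fin n) (hi : i ∈ unionC C \ interC C) (hj : j ∈ unionC C \ interC C)
    (hij : α i = α j) (hle : i ≤ j) (h : Fin k) (hih : i ∈ C h) :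
    j ∈ C h :=
  smci_eq_coeff_mem_general C α hα i j hi hj hij hle h hih
end
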